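/- Let 𝒢 be an e-graph, G its converted circuit, and φ an extraction of 𝒢. Then the cost of the evaluation α_φ equals the cost of the extraction φ: the sum of c(x_u) over inputs x_u with α_φ(x_u) = 1 equals the sum of c(u) over e-nodes u in the image of φ, i.e., Σ_{u : α_φ(x_u)=1} c(x_u) = Σ_{C ∈ dom(φ)} c(φ(C)). -/
import Mathlib


/-- Gate types for a monotone circuit. -/
inductive Gate where
  | AND : Gate
  | OR : Gate
deriving DecidableEq

/-- A weighted cyclic monotone circuit: a directed graph with a set of outputs,
a gate-type function, and a cost function (costs are only meaningful on inputs). -/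
structure Circuit (V : Type) where
  edge : V → V → Prop
  isOut : V → Prop
  gate : V → Gate
  cost : V → ℝ

namespace Circuit

variable {V : Type}

/-- The inputs are the vertices of in-degree 0. -/
def IsInput (G : Circuit V) (u : V) : Prop := ∀ v, ¬ G.edge v u

/-- A valid evaluation: each non-input gate evaluates to its gate function applied to
the values of its in-neighbors. -/
def Valid (G : Circuit V) (α : V → Bool) : Prop :=
  ∀ u : V, ¬ G.IsInput u →
    (α u = true ↔
      match G.gate u with
      | Gate.AND => ∀ v, G.edge v u → α v = true
      | Gate.OR => ∃ v, G.edge v u ∧ α v = true)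

/-- An evaluation satisfies the circuit if it is 1 on all outputs. -/
def Satisfies (G : Circuit V) (α : V → Bool) : Prop :=
  ∀ u, G.isOut u → α u = true

/-- The restriction `α|_A`: equal to `α` on `A` and `0` (false) elsewhere. -/
noncomputable def restrict (α : V → Bool) (A : Set V) : V → Bool :=
  fun u => @ite _ (u ∈ A) (Classical.propDecidable _) (α u) false

/-- A minimal satisfying evaluation: valid, satisfying, and no restriction of its
true set to a proper subset is a valid satisfying evaluation. -/
def MinSat (G : Circuit V) (α : V → Bool) : Prop :=
  G.Valid α ∧ G.Satisfies α ∧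
    ∀ A : Set V, A ⊂ {u | α u = true} →
      ¬ (G.Valid (restrict α A) ∧ G.Satisfies (restrict α A))

/-- `α` is acyclic if the subgraph `G[α]` induced by the true vertices has no
directed cycle. -/
def EvalAcyclic (G : Circuit V) (α : V → Bool) : Prop :=
  ∀ u, ¬ Relation.TransGen (fun a b => G.edge a b ∧ α a = true ∧ α b = true) u u

end Circuit

/-- An e-graph: a finite set `N` of e-nodes partitioned into e-classes (indexed by the
type `C`, via the surjective class map `cls`), a dependency relation `edge ⊆ N × C`,
a set of output classes, and a cost function. -/
structure EGraph (N C : Type) where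
  cls : N → C
  surj : Function.Surjective cls
  edge : N → C → Prop
  isOut : C → Prop
  cost : N → ℝ

namespace EGraph

variable {N C : Type}

/-- An extraction, modeled as a partial function `C → Option N`: a choice function
(on its domain) closed under dependencies. -/
def IsExtraction (𝒢 : EGraph N C) (φ : C → Option N) : Prop :=
  (∀ D u, φ D = some u → 𝒢.cls u = D) ∧
  (∀ D u D', φ D = some u → 𝒢.edge u D' → (φ D').isSome)

/-- A satisfying extraction: an extraction whose domain contains all output classes. -/
def SatExtraction (𝒢 : EGraph N C) (φ : C → Option N) : Prop :=
  𝒢.IsExtraction φ ∧ ∀ D, 𝒢.isOut D → (φ D).isSome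

/-- The restriction `φ|_𝒜` of an extraction to a set of classes. -/
noncomputable def restrictExt (φ : C → Option N) (𝒜 : Set C) : C → Option N :=
  fun D => @ite _ (D ∈ 𝒜) (Classical.propDecidable _) (φ D) none

/-- A minimally satisfying extraction: satisfying, and no restriction to a proper
subset of its domain is a satisfying extraction. -/
def MinSatExtraction (𝒢 : EGraph N C) (φ : C → Option N) : Prop :=
  𝒢.SatExtraction φ ∧
    ∀ 𝒜 : Set C, 𝒜 ⊂ {D | (φ D).isSome = true} →
      ¬ 𝒢.SatExtraction (restrictExt φ 𝒜)

/-- An extraction is acyclic if there is no (nontrivial) selected path from a class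
to itself. -/
def ExtAcyclic (𝒢 : EGraph N C) (φ : C → Option N) : Prop :=
  ∀ D, ¬ Relation.TransGen (fun D₁ D₂ => ∃ u, φ D₁ = some u ∧ 𝒢.edge u D₂) D D

/-- Vertices of the converted circuit: an input `x_u` and an AND gate `∧_u` for each
e-node `u`, and an OR gate `∨_D` for each e-class `D`. -/
inductive Vtx (N C : Type) where
  | x : N → Vtx N C
  | and : N → Vtx N C
  | or : C → Vtx N C

/-- The converted circuit of an e-graph: edges `(∧_u, ∨_D)` for `u ∈ D`,
`(∨_D, ∧_u)` for `(u, D) ∈ ℰ`, and `(x_u, ∧_u)`; outputs `∨_D` for output classes `D`;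
gate types AND on `∧_u`, OR on `∨_D`; cost `c(x_u) = c(u)`. -/
def conv (𝒢 : EGraph N C) : Circuit (Vtx N C) where
  edge a b :=
    match a, b with
    | .and u, .or D => 𝒢.cls u = D
    | .or D, .and u => 𝒢.edge u D
    | .x u, .and v => u = v
    | _, _ => False
  isOut a :=
    match a with
    | .or D => 𝒢.isOut D
    | _ => False
  gate a :=
    match a with
    | .or _ => Gate.OR
    | _ => Gate.AND
  cost a :=
    match a with
    | .x u => 𝒢.cost u
    | _ => 0

/-- The evaluation `α_φ` associated to an extraction `φ`:
`α_φ(x_u) = α_φ(∧_u) = 1` iff `φ(cls u) = u`, and `α_φ(∨_D) = 1` iff `D ∈ dom φ`. -/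
noncomputable def evalOf (𝒢 : EGraph N C) (φ : C → Option N) : Vtx N C → Bool :=
  fun a =>
    match a with
    | .x u => @decide (φ (𝒢.cls u) = some u) (Classical.propDecidable _)
    | .and u => @decide (φ (𝒢.cls u) = some u) (Classical.propDecidable _)
    | .or D => (φ D).isSome

/-- The extraction `φ_α` associated to an evaluation `α`:
`D ∈ dom φ_α` and `φ_α(D) = u` iff `u ∈ D` and `α(∧_u) = 1`. -/
noncomputable def extOf (𝒢 : EGraph N C) (α : Vtx N C → Bool) : C → Option N :=
  fun D =>
    @dite _ (∃ u, 𝒢.cls u = D ∧ α (Vtx.and u) = true) (Classical.propDecidable _)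
      (fun h => some h.choose) (fun _ => none)

end EGraph

/-- for an extraction `φ`, the cost of the evaluation `α_φ` (the sum of
the costs of the true inputs of the converted circuit) equals the cost of the
extraction (the sum of `c(φ(D))` over classes `D` in the domain of `φ`). -/
theorem stmt12 {N C : Type} [Fintype N] [Fintype C] (𝒢 : EGraph N C)
    (φ : C → Option N) (hφ : 𝒢.IsExtraction φ) :
    ∑ u ∈ Finset.univ.filter
        (fun u : N => 𝒢.evalOf φ (EGraph.Vtx.x u) = true),
        (𝒢.conv).cost (EGraph.Vtx.x u)
      = ∑ D ∈ Finset.univ.filter (fun D : C => (φ D).isSome = true),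
          ((φ D).map 𝒢.cost).getD 0 := by
    classical
  apply Finset.sum_bij (fun (u : N) _ => 𝒢.cls u)
  · intro u hu
    simp only [Finset.mem_filter, Finset.mem_univ, true_and] at hu ⊢
    simp only [EGraph.evalOf, decide_eq_true_eq] at hu
    rw [hu]; rfl
  · intro u hu v hv h
    simp only [Finset.mem_filter, Finset.mem_univ, true_and, EGraph.evalOf,
      decide_eq_true_eq] at hu hv
    have := hu.symm.trans (h ▸ hv)
    exact (Option.some_injective _ this)
  · intro D hD
    simp only [Finset.mem_filter, Finset.mem_univ, true_and] at hD
    obtain ⟨u, hu⟩ := Option.isSome_iff_exists.mp hD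
    have hcls := hφ.1 D u hu
    refine ⟨u, ?_, hcls⟩
    simp only [Finset.mem_filter, Finset.mem_univ, true_and, EGraph.evalOf,
      decide_eq_true_eq]
    rw [hcls, hu]
  · intro u hu
    simp only [Finset.mem_filter, Finset.mem_univ, true_and, EGraph.evalOf,
      decide_eq_true_eq] at hu
    rw [hu]
    rfl
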